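/- arXiv:2510.08826 — 4 statements merged into one kernel-verified Lean document; each statement's English description precedes it below -/
import Mathlib

section
/- Let B be a complete Boolean algebra and μ a measure on B (a valuation that is continuous: μ(⨆ directed U_i) = sup μ(U_i)) which is locally finite. Then μ is faithful if and only if for all U ∈ B, μ(U) = 0 implies U = 0. -/
/-!
If `U ≤ V` agree on every `K` of finite measure, modularity splits `μ (V ⊓ K)` as
`μ (U ⊓ K) + μ ((V \ U) ⊓ K)` with a finite first summand, so every `(V \ U) ⊓ K` is null.
When only `⊥` is null, local finiteness and the frame law then give `V \ U = ⊥`.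
Conversely, a null `U` cannot be told apart from `⊥`.
-/

open scoped ENNReal

section Modular

variable {α : Type*} {μ : α → ℝ≥0∞}

theorem add_eq_of_disjoint_of_modular [Lattice α] [OrderBot α] (hbot : μ ⊥ = 0)
    (hmod : ∀ a b : α, μ a + μ b = μ (a ⊔ b) + μ (a ⊓ b)) {a b : α} (hab : Disjoint a b) :
    μ a + μ b = μ (a ⊔ b) := by
  rw [hmod, hab.eq_bot, hbot, add_zero]

theorem apply_sdiff_eq_zero_of_modular [GeneralizedBooleanAlgebra α] (hbot : μ ⊥ = 0)
    (hmod : ∀ a b : α, μ a + μ b = μ (a ⊔ b) + μ (a ⊓ b)) {a b : α} (hab : a ≤ b)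
    (heq : μ a = μ b) (hfin : μ a ≠ ⊤) : μ (b \ a) = 0 := by
  have hsplit : μ a + μ (b \ a) = μ a + 0 := by
    rw [add_eq_of_disjoint_of_modular hbot hmod disjoint_sdiff_self_right,
      sup_sdiff_cancel_right hab, heq, add_zero]
  exact (ENNReal.add_right_inj hfin).mp hsplit

end Modular

theorem eq_bot_of_inf_eq_bot_of_sSup_eq_top {α : Type*} [Order.Frame α] {s : Set α}
    (hs : sSup s = ⊤) {a : α} (h : ∀ k ∈ s, a ⊓ k = ⊥) : a = ⊥ :=
  disjoint_top.mp (hs ▸ disjoint_sSup_iff.mpr fun k hk => disjoint_iff.mpr (h k hk))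

theorem faithful_iff_null_eq_bot_general (B : Type*) [CompleteBooleanAlgebra B]
    (μ : B → ℝ≥0∞) (hmono : Monotone μ) (hbot : μ ⊥ = 0)
    (hmod : ∀ U V : B, μ U + μ V = μ (U ⊔ V) + μ (U ⊓ V))
    (hlocfin : ⊤ = sSup {U : B | μ U < ⊤}) :
    (∀ U V : B, U ≤ V → (∀ K : B, μ K < ⊤ → μ (U ⊓ K) = μ (V ⊓ K)) → U = V) ↔
    (∀ U : B, μ U = 0 → U = ⊥) := by
  constructor
  · intro hfaithful U hU
    refine (hfaithful ⊥ U bot_le fun K _ => ?_).symm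
    rw [bot_inf_eq, hbot, eq_comm, ← nonpos_iff_eq_zero, ← hU]
    exact hmono inf_le_left
  · intro hnull U V hUV hK
    refine le_antisymm hUV (sdiff_eq_bot_iff.mp ?_)
    refine eq_bot_of_inf_eq_bot_of_sSup_eq_top hlocfin.symm fun K hKfin => hnull _ ?_
    rw [inf_sdiff_distrib_right]
    exact apply_sdiff_eq_zero_of_modular hbot hmod (inf_le_inf_right K hUV) (hK K hKfin)
      ((hmono inf_le_right).trans_lt hKfin).ne

theorem faithful_iff_null_eq_bot (B : Type*) [CompleteBooleanAlgebra B]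
    (μ : B → ℝ≥0∞) (hmono : Monotone μ) (hbot : μ ⊥ = 0)
    (hmod : ∀ U V : B, μ U + μ V = μ (U ⊔ V) + μ (U ⊓ V))
    (hcont : ∀ {ι : Type*} (U : ι → B), Directed (· ≤ ·) U →
      μ (⨆ i, U i) = ⨆ i, μ (U i))
    (hlocfin : ⊤ = sSup {U : B | μ U < ⊤}) :
    (∀ U V : B, U ≤ V → (∀ K : B, μ K < ⊤ → μ (U ⊓ K) = μ (V ⊓ K)) → U = V) ↔
    (∀ U : B, μ U = 0 → U = ⊥) :=
  faithful_iff_null_eq_bot_general B μ hmono hbot hmod hlocfin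
end

section
/- Let L be a complete Heyting algebra (frame), and S ⊆ L a subset closed under arbitrary infima and such that for all U ∈ S and V ∈ L, the Heyting implication V ⇨ U belongs to S. Let N = ⨅ S. If S with the induced order is a Boolean algebra, then S = {V ⇨ N : V ∈ L}. -/
theorem eq_himp_of_inf_le_of_sInf_upper_eq_top {L : Type*} [Order.Frame L] {S : Set L}
    {N U V : L} (hU : ∀ X : L, X ⇨ U ∈ S) (hNU : N ≤ U) (hmeet : U ⊓ V ≤ N)
    (hjoin : sInf {W : L | W ∈ S ∧ U ≤ W ∧ V ≤ W} = ⊤) : U = V ⇨ N := by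
  refine le_antisymm (le_himp_iff.2 hmeet) ?_
  -- `(V ⇨ N) ⇨ U` is an upper bound of `U` and `V` in `S`, hence it is `⊤`.
  have hupper : (V ⇨ N) ⇨ U ∈ {W : L | W ∈ S ∧ U ≤ W ∧ V ≤ W} :=
    ⟨hU _, le_himp_iff.2 inf_le_left, le_himp_himp.trans (himp_le_himp_left hNU)⟩
  exact himp_eq_top_iff.1 (top_le_iff.1 (hjoin ▸ sInf_le hupper))

theorem boolean_sublocale_is_b_of_N
    (L : Type*) [Order.Frame L] (S : Set L)
    (hInf : ∀ T : Set L, T ⊆ S → sInf T ∈ S)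
    (hHimp : ∀ U ∈ S, ∀ V : L, V ⇨ U ∈ S)
    (N : L) (hN : N = sInf S)
    (hBool : ∀ U ∈ S, ∃ V ∈ S, U ⊓ V = N ∧
      sInf {W : L | W ∈ S ∧ U ≤ W ∧ V ≤ W} = sInf (∅ : Set L)) :
    S = {W : L | ∃ V : L, W = V ⇨ N} := by
  have hNS : N ∈ S := hN ▸ hInf S le_rfl
  ext U
  refine ⟨fun hU => ?_, ?_⟩
  · obtain ⟨V, -, hmeet, hjoin⟩ := hBool U hU
    exact ⟨V, eq_himp_of_inf_le_of_sInf_upper_eq_top (hHimp U hU) (hN ▸ sInf_le hU) hmeet.le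
      (hjoin.trans sInf_empty)⟩
  · rintro ⟨V, rfl⟩
    exact hHimp N hNS V
end

section
/- Let X be a Hausdorff topological space. The assignment θ*(U) = {K ⊆ U : K compact}, from open sets of X to ideals of the lattice of compact subsets of X, preserves arbitrary unions: θ*(⋃_i U_i) equals the ideal generated by the sets θ*(U_i), i.e., every compact K ⊆ ⋃_i U_i can be written as K = K_{i₁} ∪ ... ∪ K_{iₙ} with each K_{iⱼ} compact and contained in some U_{iⱼ}. -/
theorem theta_star_preserves_unions
    (X : Type*) [TopologicalSpace X] [T2Space X]
    {ι : Type*} (U : ι → Set X) (hU : ∀ i, IsOpen (U i))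
    (K : Set X) (hK : IsCompact K) (hKU : K ⊆ ⋃ i, U i) :
    ∃ (n : ℕ) (ind : Fin n → ι) (C : Fin n → Set X),
      (∀ j, IsCompact (C j) ∧ C j ⊆ U (ind j)) ∧ K = ⋃ j, C j := by
  classical
  obtain ⟨t, ht⟩ := hK.elim_finite_subcover U hU hKU
  obtain ⟨Kf, hKc, hKsub, hKeq⟩ := hK.finite_compact_cover t U (fun i _ => hU i) ht
  obtain ⟨e⟩ : Nonempty (Fin t.card ≃ {i // i ∈ t}) :=
    ⟨(Finset.equivFin t).symm⟩
  refine ⟨t.card, fun j => (e j : ι), fun j => Kf (e j : ι),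
    fun j => ⟨hKc _, hKsub _⟩, ?_⟩
  rw [hKeq]
  ext x
  simp only [Set.mem_iUnion, exists_prop]
  constructor
  · rintro ⟨i, hi, hx⟩
    exact ⟨e.symm ⟨i, hi⟩, by simpa using hx⟩
  · rintro ⟨j, hx⟩
    exact ⟨e j, (e j).2, hx⟩
end

section
/- Let X be a Hausdorff topological space and λ a regular content on X. Then λ is a valuation on the lattice of compact subsets: for all compact sets C₁, C₂, λ(C₁) + λ(C₂) = λ(C₁ ∪ C₂) + λ(C₁ ∩ C₂). -/
open scoped NNReal

/-!
Fix a compact neighbourhood `E` of `C ∩ D`, with an open `U` such that `C ∩ D ⊆ U ⊆ E`.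
The compact sets `C \ U` and `D \ U` are disjoint from each other and from `C ∩ D`, and
`C \ U` is disjoint from `D`, so additivity and subadditivity give
`λ C + λ D ≤ λ (C ∪ D) + λ E` and `λ (C ∪ D) + 2 λ (C ∩ D) ≤ λ C + λ D + λ E`.
Regularity lets `λ E` tend to `λ (C ∩ D)`, which gives both inequalities of the valuation
identity. If `C ∩ D` has no compact neighbourhood at all, regularity forces `λ` to vanish on
every compact superset of `C ∩ D`, and the identity reads `0 = 0`.
-/

/-- `K ≪ K'` : there is an open set between `K` and `K'`. -/
def WayBelowCompact {X : Type*} [TopologicalSpace X] (K K' : Set X) : Prop :=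
  ∃ U : Set X, IsOpen U ∧ K ⊆ U ∧ U ⊆ K'

namespace NNReal

lemma le_add_csInf {s : Set ℝ≥0} {a b : ℝ≥0} (hs : s.Nonempty)
    (h : ∀ r ∈ s, a ≤ b + r) : a ≤ b + sInf s :=
  tsub_le_iff_left.1 (le_csInf hs fun r hr => tsub_le_iff_left.2 (h r hr))

end NNReal

section

variable {X : Type*} [TopologicalSpace X]

structure IsContent (l : Set X → ℝ≥0) : Prop where
  mono : ∀ C D : Set X, IsCompact C → IsCompact D → C ⊆ D → l C ≤ l D
  union_le : ∀ C D : Set X, IsCompact C → IsCompact D → l (C ∪ D) ≤ l C + l D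
  union_eq_of_disjoint : ∀ C D : Set X, IsCompact C → IsCompact D → C ∩ D = ∅ →
    l (C ∪ D) = l C + l D

def neighbourhoodValues (l : Set X → ℝ≥0) (K : Set X) : Set ℝ≥0 :=
  {r | ∃ K' : Set X, IsCompact K' ∧ WayBelowCompact K K' ∧ r = l K'}

lemma WayBelowCompact.mono_left {L K K' : Set X} (hLK : L ⊆ K) (h : WayBelowCompact K K') :
    WayBelowCompact L K' :=
  let ⟨U, hU, hKU, hUK'⟩ := h
  ⟨U, hU, hLK.trans hKU, hUK'⟩

lemma neighbourhoodValues_anti {l : Set X → ℝ≥0} {L K : Set X} (hLK : L ⊆ K) :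
    neighbourhoodValues l K ⊆ neighbourhoodValues l L := by
  rintro r ⟨K', hK', hKK', rfl⟩
  exact ⟨K', hK', hKK'.mono_left hLK, rfl⟩

lemma eq_zero_of_neighbourhoodValues_eq_empty {l : Set X → ℝ≥0} {L K : Set X}
    (hreg : l K = sInf (neighbourhoodValues l K)) (hLK : L ⊆ K)
    (hL : neighbourhoodValues l L = ∅) : l K = 0 := by
  rw [hreg, Set.subset_empty_iff.1 ((neighbourhoodValues_anti hLK).trans hL.subset),
    NNReal.sInf_empty]

namespace IsContent

variable {l : Set X → ℝ≥0} {C D E U : Set X}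

lemma le_diff_add (hl : IsContent l) (hC : IsCompact C) (hU : IsOpen U) (hE : IsCompact E)
    (hUE : U ⊆ E) : l C ≤ l (C \ U) + l E :=
  calc l C ≤ l (C \ U ∪ E) := hl.mono _ _ hC ((hC.diff hU).union hE) fun x hx => by
        by_cases hxU : x ∈ U
        exacts [Or.inr (hUE hxU), Or.inl ⟨hx, hxU⟩]
    _ ≤ l (C \ U) + l E := hl.union_le _ _ (hC.diff hU) hE

lemma diff_add_le (hl : IsContent l) (hC : IsCompact C) (hU : IsOpen U) {K : Set X}
    (hK : IsCompact K) (hKC : K ⊆ C) (hKU : K ⊆ U) : l (C \ U) + l K ≤ l C := by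
  have hdisj : C \ U ∩ K = ∅ :=
    Set.disjoint_iff_inter_eq_empty.1 (Set.disjoint_sdiff_left.mono_right hKU)
  rw [← hl.union_eq_of_disjoint _ _ (hC.diff hU) hK hdisj]
  exact hl.mono _ _ ((hC.diff hU).union hK) hC (Set.union_subset Set.sdiff_subset hKC)

lemma add_le_union_add (hl : IsContent l) (hC : IsCompact C) (hD : IsCompact D)
    (hE : IsCompact E) (hCDE : WayBelowCompact (C ∩ D) E) :
    l C + l D ≤ l (C ∪ D) + l E := by
  obtain ⟨U, hU, hCDU, hUE⟩ := hCDE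
  have hdisj : C \ U ∩ D = ∅ := Set.disjoint_iff_inter_eq_empty.1 <|
    Set.disjoint_left.2 fun _ ⟨hxC, hxU⟩ hxD => hxU (hCDU ⟨hxC, hxD⟩)
  calc l C + l D ≤ l (C \ U) + l D + l E := by
        rw [add_right_comm]; gcongr; exact hl.le_diff_add hC hU hE hUE
    _ = l (C \ U ∪ D) + l E := by rw [hl.union_eq_of_disjoint _ _ (hC.diff hU) hD hdisj]
    _ ≤ l (C ∪ D) + l E := by
        gcongr
        exact hl.mono _ _ ((hC.diff hU).union hD) (hC.union hD)
          (Set.union_subset_union_left D Set.sdiff_subset)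

lemma union_add_inter_add_inter_le [T2Space X] (hl : IsContent l) (hC : IsCompact C)
    (hD : IsCompact D) (hE : IsCompact E) (hCDE : WayBelowCompact (C ∩ D) E) :
    l (C ∪ D) + l (C ∩ D) + l (C ∩ D) ≤ l C + l D + l E := by
  obtain ⟨U, hU, hCDU, hUE⟩ := hCDE
  have hdisj : C \ U ∩ (D \ U) = ∅ := Set.disjoint_iff_inter_eq_empty.1 <|
    Set.disjoint_left.2 fun _ ⟨hxC, hxU⟩ ⟨hxD, _⟩ => hxU (hCDU ⟨hxC, hxD⟩)
  have hunion : l (C ∪ D) ≤ l (C \ U) + l (D \ U) + l E := by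
    rw [← hl.union_eq_of_disjoint _ _ (hC.diff hU) (hD.diff hU) hdisj,
      ← Set.union_sdiff_distrib]
    exact hl.le_diff_add (hC.union hD) hU hE hUE
  calc l (C ∪ D) + l (C ∩ D) + l (C ∩ D)
      ≤ (l (C \ U) + l (C ∩ D)) + (l (D \ U) + l (C ∩ D)) + l E := by
        grw [hunion]; apply le_of_eq; ring
    _ ≤ l C + l D + l E := by
        gcongr
        · exact hl.diff_add_le hC hU (hC.inter hD) Set.inter_subset_left hCDU
        · exact hl.diff_add_le hD hU (hC.inter hD) Set.inter_subset_right hCDU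

end IsContent

end

theorem regular_content_is_valuation
    (X : Type*) [TopologicalSpace X] [T2Space X]
    (l : Set X → ℝ≥0)
    (hmono : ∀ C D : Set X, IsCompact C → IsCompact D → C ⊆ D → l C ≤ l D)
    (hsub : ∀ C D : Set X, IsCompact C → IsCompact D → l (C ∪ D) ≤ l C + l D)
    (hadd : ∀ C D : Set X, IsCompact C → IsCompact D → C ∩ D = ∅ →
      l (C ∪ D) = l C + l D)
    (hreg : ∀ K : Set X, IsCompact K →
      l K = sInf {r : ℝ≥0 | ∃ K' : Set X, IsCompact K' ∧
        WayBelowCompact K K' ∧ r = l K'}) :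
    ∀ C₁ C₂ : Set X, IsCompact C₁ → IsCompact C₂ →
      l C₁ + l C₂ = l (C₁ ∪ C₂) + l (C₁ ∩ C₂) := by
  intro C D hC hD
  have hl : IsContent l := ⟨hmono, hsub, hadd⟩
  have hreg' : ∀ K, IsCompact K → l K = sInf (neighbourhoodValues l K) := hreg
  rcases (neighbourhoodValues l (C ∩ D)).eq_empty_or_nonempty with hS | hS
  · have hzero {K} (hK : IsCompact K) (hCDK : C ∩ D ⊆ K) : l K = 0 :=
      eq_zero_of_neighbourhoodValues_eq_empty (hreg' K hK) hCDK hS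
    rw [hzero hC Set.inter_subset_left, hzero hD Set.inter_subset_right,
      hzero (hC.union hD) (Set.inter_subset_left.trans Set.subset_union_left),
      hzero (hC.inter hD) subset_rfl]
  · have hle : l C + l D ≤ l (C ∪ D) + l (C ∩ D) := by
      rw [hreg' _ (hC.inter hD)]
      refine NNReal.le_add_csInf hS ?_
      rintro _ ⟨E, hE, hCDE, rfl⟩
      exact hl.add_le_union_add hC hD hE hCDE
    have hge : l (C ∪ D) + l (C ∩ D) + l (C ∩ D) ≤ l C + l D + l (C ∩ D) := by
      conv_rhs => rw [hreg' _ (hC.inter hD)]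
      refine NNReal.le_add_csInf hS ?_
      rintro _ ⟨E, hE, hCDE, rfl⟩
      exact hl.union_add_inter_add_inter_le hC hD hE hCDE
    exact le_antisymm hle (le_of_add_le_add_right hge)
end
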